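/- Fix a weakly increasing carrier Y. If b is the reading word of a semistandard tableau of shape lambda, then the output word b' of the carrier algorithm applied to (Y, b) is again the reading word of a semistandard tableau of the same shape lambda, provided that inserting the letters of b into Y never causes the carrier to grow (i.e., each step performs a genuine replacement), and more generally whenever the dual bi-word structure is preserved; in the setting of the box-ball system (Y consisting of the labels of empty boxes and b the box-label sequence of a state), this hypothesis is automatic and T*(b) is a tableau word of the same shape as b. -/

import Mathlib

/-- The letter unloaded when the (sorted) carrier `C` loads `x`: the smallest
letter of `C` strictly greater than `x` if one exists, otherwise the smallest
letter of `C`. -/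
def carrierOut (C : List ℕ) (x : ℕ) : ℕ :=
  match C.filter (fun c => x < c) with
  | [] => C.headI
  | y :: _ => y

/-- The carrier after one loading/unloading step: the output letter is
replaced by `x`, keeping the carrier sorted. -/
def carrierNext (C : List ℕ) (x : ℕ) : List ℕ :=
  List.orderedInsert (· ≤ ·) x (C.erase (carrierOut C x))

/-- The carrier algorithm: process the letters of the input word from left to
right, returning the final carrier together with the output word. -/
def carrierRun : List ℕ → List ℕ → List ℕ × List ℕ
  | C, [] => (C, [])
  | C, x :: w =>
      let r := carrierRun (carrierNext C x) w
      (r.1, carrierOut C x :: r.2)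

/-- A semistandard Young tableau, encoded as its list of rows from top to
bottom: rows are nonempty and weakly increasing, row lengths weakly decrease,
and columns strictly increase downwards. -/
def IsSSYT (t : List (List ℕ)) : Prop :=
  (∀ r ∈ t, r ≠ []) ∧
  (∀ r ∈ t, r.Pairwise (· ≤ ·)) ∧
  (∀ i, i + 1 < t.length → (t.getD (i + 1) []).length ≤ (t.getD i []).length) ∧
  (∀ i j, i + 1 < t.length → j < (t.getD (i + 1) []).length →
      (t.getD i []).getD j 0 < (t.getD (i + 1) []).getD j 0)

/-- The reading word of a tableau: the rows read from bottom to top, each row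
left to right. -/
def readingWord (t : List (List ℕ)) : List ℕ := t.reverse.flatten

/-- `Bumps C w` holds when every step of the carrier algorithm run on `(C, w)`
performs a genuine replacement. -/
def Bumps : List ℕ → List ℕ → Prop
  | _, [] => True
  | C, x :: w => (∃ c ∈ C, x < c) ∧ Bumps (carrierNext C x) w

namespace CP


abbrev bi (C : List ℕ) (x : ℕ) : ℕ := C.findIdx (fun c => decide (x < c))

lemma bi_lt (C : List ℕ) (x : ℕ) (hb : ∃ c ∈ C, x < c) : bi C x < C.length := by
  apply List.findIdx_lt_length_of_exists; simpa using hb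

lemma lt_getD_bi {C : List ℕ} {x : ℕ} (hb : bi C x < C.length) : x < C.getD (bi C x) 0 := by
  rw [List.getD_eq_getElem _ _ hb]
  simpa using List.findIdx_getElem (w := hb)

lemma getD_le_of_lt_bi {C : List ℕ} {x j : ℕ} (hj : j < bi C x) (hjl : j < C.length) :
    C.getD j 0 ≤ x := by
  rw [List.getD_eq_getElem _ _ hjl]
  have := List.not_of_lt_findIdx hj (xs := C)
  simpa using this

lemma sorted_getD_le {C : List ℕ} (hC : C.Pairwise (· ≤ ·)) {i j : ℕ} (hij : i ≤ j)
    (hj : j < C.length) : C.getD i 0 ≤ C.getD j 0 := by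
  rcases eq_or_lt_of_le hij with rfl | hij
  · exact le_refl _
  · rw [List.getD_eq_getElem _ _ (lt_trans hij hj), List.getD_eq_getElem _ _ hj]
    exact List.pairwise_iff_getElem.mp hC i j (lt_trans hij hj) hj hij

lemma carrierOut_eq (C : List ℕ) (x : ℕ) (hb : ∃ c ∈ C, x < c) :
    carrierOut C x = C.getD (bi C x) 0 := by
  induction C with
  | nil => simp at hb
  | cons a t ih =>
    by_cases h : x < a
    · simp [carrierOut, List.findIdx_cons, h, List.filter_cons_of_pos]
    · have hb' : ∃ c ∈ t, x < c := by
        obtain ⟨c, hc, hxc⟩ := hb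
        rcases List.mem_cons.mp hc with rfl | hc
        · exact absurd hxc h
        · exact ⟨c, hc, hxc⟩
      have hfil : t.filter (fun c => decide (x < c)) ≠ [] := by
        rw [Ne, List.filter_eq_nil_iff]
        push_neg
        obtain ⟨c, hc, hxc⟩ := hb'
        exact ⟨c, hc, by simpa using hxc⟩
      rcases hfe : t.filter (fun c => decide (x < c)) with _ | ⟨y, ys⟩
      · exact absurd hfe hfil
      · have h1 : carrierOut (a :: t) x = y := by
          simp only [carrierOut, List.filter_cons]
          rw [if_neg (by simp [h]), hfe]
        have h2 : carrierOut t x = y := by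
          simp only [carrierOut, hfe]
        rw [h1, show bi (a :: t) x = bi t x + 1 by simp [bi, List.findIdx_cons, h]]
        rw [List.getD_cons_succ, ← ih hb', h2]



lemma sorted_set {C : List ℕ} {x : ℕ} (hC : C.Pairwise (· ≤ ·)) (hb : ∃ c ∈ C, x < c) :
    (C.set (bi C x) x).Pairwise (· ≤ ·) := by
  have hi := bi_lt C x hb
  rw [List.pairwise_iff_getElem] at hC ⊢
  intro a b ha hb' hab
  simp only [List.length_set] at ha hb'
  rw [List.getElem_set, List.getElem_set]
  split <;> split
  · omega
  · -- a = bi, b ≠ bi : x ≤ C[b]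
    rename_i h1 h2
    have hx : x < C.getD (bi C x) 0 := lt_getD_bi hi
    rw [List.getD_eq_getElem _ _ hi] at hx
    have hcb : C[bi C x] ≤ C[b] := hC (bi C x) b hi hb' (by omega)
    omega
  · -- b = bi : C[a] ≤ x, a < bi
    rename_i h1 h2
    have := getD_le_of_lt_bi (C := C) (x := x) (j := a) (by omega) ha
    rw [List.getD_eq_getElem _ _ ha] at this
    omega
  · exact hC a b ha hb' hab



lemma erase_eq_eraseIdx_bi {C : List ℕ} {x : ℕ} (hC : C.Pairwise (· ≤ ·))
    (hb : ∃ c ∈ C, x < c) :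
    C.erase (C.getD (bi C x) 0) = C.take (bi C x) ++ C.drop (bi C x + 1) := by
  have hi := bi_lt C x hb
  have hnm : C.getD (bi C x) 0 ∉ C.take (bi C x) := by
    intro hmem
    obtain ⟨j, hj, hje⟩ := List.mem_iff_getElem.mp hmem
    rw [List.length_take] at hj
    have hjlt : j < bi C x := lt_of_lt_of_le hj (min_le_left _ _)
    have hjl : j < C.length := lt_trans hjlt hi
    rw [List.getElem_take] at hje
    have h1 : C.getD j 0 ≤ x := getD_le_of_lt_bi hjlt hjl
    have h2 : x < C.getD (bi C x) 0 := lt_getD_bi hi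
    rw [List.getD_eq_getElem _ _ hjl] at h1
    rw [← hje] at h2
    omega
  calc C.erase (C.getD (bi C x) 0)
      = (C.take (bi C x) ++ C.drop (bi C x)).erase (C.getD (bi C x) 0) := by
        rw [List.take_append_drop]
    _ = C.take (bi C x) ++ (C.drop (bi C x)).erase (C.getD (bi C x) 0) :=
        List.erase_append_right _ hnm
    _ = C.take (bi C x) ++ C.drop (bi C x + 1) := by
        rw [List.drop_eq_getElem_cons hi, List.getD_eq_getElem _ _ hi,
          List.erase_cons_head]

lemma carrierNext_eq {C : List ℕ} {x : ℕ} (hC : C.Pairwise (· ≤ ·)) (hb : ∃ c ∈ C, x < c) :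
    carrierNext C x = C.set (bi C x) x := by
  have hi := bi_lt C x hb
  have hperm : List.Perm (carrierNext C x) (C.set (bi C x) x) := by
    have p1 : List.Perm (carrierNext C x) (x :: C.erase (carrierOut C x)) :=
      List.perm_orderedInsert _ _ _
    rw [carrierOut_eq C x hb, erase_eq_eraseIdx_bi hC hb] at p1
    have p2 : List.Perm (C.take (bi C x) ++ x :: C.drop (bi C x + 1))
        (x :: (C.take (bi C x) ++ C.drop (bi C x + 1))) := List.perm_middle
    rw [List.set_eq_take_cons_drop x hi]
    exact p1.trans p2.symm
  exact List.Perm.eq_of_pairwise'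
    (List.Pairwise.orderedInsert _ _ (hC.erase _)) (sorted_set hC hb) hperm



@[simp] lemma carrierRun_nil (C : List ℕ) : carrierRun C [] = (C, []) := rfl
@[simp] lemma carrierRun_cons (C x w) :
    carrierRun C (x :: w) =
      ((carrierRun (carrierNext C x) w).1,
        carrierOut C x :: (carrierRun (carrierNext C x) w).2) := rfl

@[simp] lemma bumps_nil (C : List ℕ) : Bumps C [] := trivial
lemma bumps_cons {C x w} : Bumps C (x :: w) ↔ (∃ c ∈ C, x < c) ∧ Bumps (carrierNext C x) w :=
  Iff.rfl

lemma carrierRun_append (C u v) :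
    carrierRun C (u ++ v) =
      ((carrierRun (carrierRun C u).1 v).1,
        (carrierRun C u).2 ++ (carrierRun (carrierRun C u).1 v).2) := by
  induction u generalizing C with
  | nil => simp
  | cons x u ih => simp [ih]

lemma bumps_append {C u v} (h : Bumps C (u ++ v)) :
    Bumps C u ∧ Bumps (carrierRun C u).1 v := by
  induction u generalizing C with
  | nil => exact ⟨trivial, h⟩
  | cons x u ih =>
    rw [List.cons_append, bumps_cons] at h
    obtain ⟨h1, h2⟩ := h
    obtain ⟨h3, h4⟩ := ih h2
    exact ⟨⟨h1, h3⟩, h4⟩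

lemma run_fst_length {C s : List ℕ} (hC : C.Pairwise (· ≤ ·)) (hb : Bumps C s) :
    (carrierRun C s).1.length = C.length ∧ (carrierRun C s).1.Pairwise (· ≤ ·) := by
  induction s generalizing C with
  | nil => exact ⟨rfl, hC⟩
  | cons x s ih =>
    obtain ⟨h1, h2⟩ := hb
    rw [carrierRun_cons]
    have hnext := carrierNext_eq hC h1
    have hsorted : (carrierNext C x).Pairwise (· ≤ ·) := hnext ▸ sorted_set hC h1
    obtain ⟨l1, l2⟩ := ih hsorted h2
    refine ⟨?_, l2⟩
    rw [l1, hnext, List.length_set]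

lemma run_snd_length (C s : List ℕ) : (carrierRun C s).2.length = s.length := by
  induction s generalizing C with
  | nil => rfl
  | cons x s ih => simp [ih]

lemma getD_set' {l : List ℕ} {i : ℕ} (j x : ℕ) (hi : i < l.length) :
    (l.set i x).getD j 0 = if j = i then x else l.getD j 0 := by
  by_cases hj : j < l.length
  · rw [List.getD_eq_getElem _ _ (by simpa using hj), List.getElem_set]
    split
    · simp_all
    · rw [if_neg (by omega), List.getD_eq_getElem _ _ hj]
  · rw [List.getD_eq_default _ _ (by simpa using Nat.le_of_not_lt hj),
      List.getD_eq_default _ _ (Nat.le_of_not_lt hj)]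
    rw [if_neg (by omega)]

lemma sorted_cons_headI {x : ℕ} {s : List ℕ} (hs : (x :: s).Pairwise (· ≤ ·))
    (hne : s ≠ []) : x ≤ s.headI := by
  cases s with
  | nil => exact absurd rfl hne
  | cons y t => exact List.rel_of_pairwise_cons hs (by simp)

/-- values below the first bump position are untouched by the whole run -/
lemma run_fst_getD_low {C s : List ℕ} (hC : C.Pairwise (· ≤ ·)) (hs : s.Pairwise (· ≤ ·))
    (hb : Bumps C s) {j : ℕ} (hj : j < C.length)
    (hlow : s ≠ [] → C.getD j 0 ≤ s.headI) :
    (carrierRun C s).1.getD j 0 = C.getD j 0 := by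
  induction s generalizing C with
  | nil => rfl
  | cons x s ih =>
    obtain ⟨h1, h2⟩ := hb
    have hxj : C.getD j 0 ≤ x := hlow (by simp)
    have hi := bi_lt C x h1
    have hji : j ≠ bi C x := by
      have := lt_getD_bi hi
      intro h; rw [h] at hxj; omega
    have hnext := carrierNext_eq hC h1
    have hCj : (carrierNext C x).getD j 0 = C.getD j 0 := by
      rw [hnext, getD_set' j x hi, if_neg hji]
    rw [carrierRun_cons]
    have hsorted : (carrierNext C x).Pairwise (· ≤ ·) := hnext ▸ sorted_set hC h1
    have hlen : j < (carrierNext C x).length := by rw [hnext, List.length_set]; exact hj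
    rw [ih hsorted hs.of_cons h2 hlen ?_, hCj]
    intro hne
    rw [hCj]
    exact le_trans hxj (sorted_cons_headI hs hne)




lemma out_le_out_next {C : List ℕ} {x x' : ℕ} (hC : C.Pairwise (· ≤ ·)) (hxx' : x ≤ x')
    (hb1 : ∃ c ∈ C, x < c) (hb2 : ∃ c ∈ carrierNext C x, x' < c) :
    carrierOut C x ≤ carrierOut (carrierNext C x) x' := by
  have hi := bi_lt C x hb1
  have hnext := carrierNext_eq hC hb1
  rw [hnext] at hb2 ⊢
  have hi' := bi_lt _ x' hb2
  rw [List.length_set] at hi'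
  have hgt : bi C x < bi (C.set (bi C x) x) x' := by
    by_contra h
    push_neg at h
    have hle : (C.set (bi C x) x).getD (bi (C.set (bi C x) x) x') 0 ≤ x' := by
      rw [getD_set' _ x hi]
      rcases eq_or_lt_of_le h with heq | hlt
      · rw [if_pos heq]; exact hxx'
      · rw [if_neg (by omega)]
        exact le_trans (getD_le_of_lt_bi (x := x) hlt (by omega)) hxx'
    have := lt_getD_bi (by rw [List.length_set]; exact hi')
    omega
  rw [carrierOut_eq C x hb1, carrierOut_eq _ x' hb2,
    getD_set' _ x hi, if_neg (by omega)]
  exact sorted_getD_le hC (le_of_lt hgt) hi'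

lemma run_snd_sorted {C s : List ℕ} (hC : C.Pairwise (· ≤ ·)) (hs : s.Pairwise (· ≤ ·))
    (hb : Bumps C s) : (carrierRun C s).2.Pairwise (· ≤ ·) := by
  rw [← List.isChain_iff_pairwise]
  induction s generalizing C with
  | nil => constructor
  | cons x s ih =>
    obtain ⟨h1, h2⟩ := hb
    rw [carrierRun_cons]
    have hsorted : (carrierNext C x).Pairwise (· ≤ ·) :=
      (carrierNext_eq hC h1) ▸ sorted_set hC h1
    refine List.isChain_cons.mpr ⟨?_, ih hsorted hs.of_cons h2⟩
    intro y hy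
    cases s with
    | nil => simp at hy
    | cons x' s2 =>
      rw [carrierRun_cons] at hy
      simp only [List.head?_cons, Option.mem_def, Option.some.injEq] at hy
      subst hy
      exact out_le_out_next hC (List.rel_of_pairwise_cons hs (by simp)) h1 h2.1



lemma two_row : ∀ (s s' C D : List ℕ) (k : ℕ),
    C.Pairwise (· ≤ ·) → D.Pairwise (· ≤ ·) → s.Pairwise (· ≤ ·) → s'.Pairwise (· ≤ ·) →
    s.length ≤ s'.length →
    (∀ j, j < s.length → s'.getD j 0 < s.getD j 0) →
    Bumps C s → Bumps D s' →
    D.length = C.length →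
    k ≤ C.length →
    (∀ j, k ≤ j → j < C.length → D.getD j 0 = ((carrierRun C s).1).getD j 0) →
    (∀ j, j < k → (s ≠ [] → C.getD j 0 ≤ s.headI)) →
    (∀ j, j < k → (s' ≠ [] → D.getD j 0 ≤ s'.headI)) →
    ∀ j, j < s.length → ((carrierRun D s').2).getD j 0 < ((carrierRun C s).2).getD j 0
  | [], _, _, _, _ => by
    intro _ _ _ _ _ _ _ _ _ _ _ _ _ j hj
    simp at hj
  | x :: s2, s', C, D, k => by
    intro hC hD hs hs' hlen hpt hbC hbD hDC hk h5 h6 h7 j hj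
    cases s' with
    | nil => simp at hlen
    | cons x' s'2 =>
      obtain ⟨hbC1, hbC2⟩ := hbC
      obtain ⟨hbD1, hbD2⟩ := hbD
      have hp := bi_lt C x hbC1
      have hq := bi_lt D x' hbD1
      have hx'x : x' < x := by have := hpt 0 (by simp); simpa using this
      have hCnext := carrierNext_eq hC hbC1
      have hDnext := carrierNext_eq hD hbD1
      have hCsort : (C.set (bi C x) x).Pairwise (· ≤ ·) := sorted_set hC hbC1
      have hDsort : (D.set (bi D x') x').Pairwise (· ≤ ·) := sorted_set hD hbD1
      rw [hCnext] at hbC2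
      rw [hDnext] at hbD2
      -- k ≤ p
      have hkp : k ≤ bi C x := by
        by_contra h
        push_neg at h
        have h1 : C.getD (bi C x) 0 ≤ x := h6 _ h (by simp)
        have h2 := lt_getD_bi hp
        omega
      -- k ≤ q
      have hkq : k ≤ bi D x' := by
        by_contra h
        push_neg at h
        have h1 : D.getD (bi D x') 0 ≤ x' := h7 _ h (by simp)
        have h2 := lt_getD_bi hq
        omega
      -- final carrier of run1 at position p equals x
      have hCm_p : (carrierRun (C.set (bi C x) x) s2).1.getD (bi C x) 0 = x := by
        rw [run_fst_getD_low hCsort hs.of_cons hbC2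
          (by rw [List.length_set]; exact hp) ?_, getD_set' _ _ hp, if_pos rfl]
        intro hne
        rw [getD_set' _ _ hp, if_pos rfl]
        exact sorted_cons_headI hs hne
      -- D at position p equals x
      have hDp : D.getD (bi C x) 0 = x := by
        rw [h5 _ hkp hp, carrierRun_cons, hCnext]
        exact hCm_p
      -- q ≤ p
      have hqp : bi D x' ≤ bi C x := by
        by_contra h
        push_neg at h
        have := getD_le_of_lt_bi (x := x') h (by rw [hDC]; exact hp)
        omega
      -- head comparison
      have hhead : D.getD (bi D x') 0 < C.getD (bi C x) 0 := by
        rcases eq_or_lt_of_le hqp with heq | hlt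
        · rw [heq, hDp]
          exact lt_getD_bi hp
        · have e1 : D.getD (bi D x') 0 =
              (carrierRun (C.set (bi C x) x) s2).1.getD (bi D x') 0 := by
            rw [h5 _ hkq (by omega), carrierRun_cons, hCnext]
          have e2 : (carrierRun (C.set (bi C x) x) s2).1.getD (bi D x') 0 =
              (C.set (bi C x) x).getD (bi D x') 0 := by
            apply run_fst_getD_low hCsort hs.of_cons hbC2
              (by rw [List.length_set]; omega)
            intro hne
            rw [getD_set' _ _ hp, if_neg (by omega)]
            exact le_trans (getD_le_of_lt_bi hlt (by omega))
              (sorted_cons_headI hs hne)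
          have e3 : (C.set (bi C x) x).getD (bi D x') 0 = C.getD (bi D x') 0 := by
            rw [getD_set' _ _ hp, if_neg (by omega)]
          have e4 : C.getD (bi D x') 0 ≤ x := getD_le_of_lt_bi hlt (by omega)
          have e5 := lt_getD_bi hp
          omega
      cases j with
      | zero =>
        rw [carrierRun_cons, carrierRun_cons]
        simp only [List.getD_cons_zero]
        rw [carrierOut_eq C x hbC1, carrierOut_eq D x' hbD1]
        exact hhead
      | succ j =>
        rw [carrierRun_cons, carrierRun_cons]
        simp only [List.getD_cons_succ]
        rw [hCnext, hDnext]
        refine two_row s2 s'2 (C.set (bi C x) x) (D.set (bi D x') x') (bi D x' + 1)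
          hCsort hDsort hs.of_cons hs'.of_cons (by simpa using hlen)
          ?_ hbC2 hbD2 ?_ ?_ ?_ ?_ ?_ j (by simpa using hj)
        · intro j hj2
          have := hpt (j + 1) (by simpa using hj2)
          simpa using this
        · rw [List.length_set, List.length_set, hDC]
        · rw [List.length_set]; omega
        · intro j hj1 hj2
          rw [List.length_set] at hj2
          rw [getD_set' _ _ hq, if_neg (by omega)]
          rw [h5 _ (by omega) hj2, carrierRun_cons, hCnext]
        · intro j hj1 hne
          rw [getD_set' _ _ hp]
          split
          · rename_i h
            subst h
            exact sorted_cons_headI hs hne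
          · rename_i h
            have hjp : j < bi C x := by omega
            exact le_trans (le_trans (getD_le_of_lt_bi hjp (by omega)) (le_refl x))
              (sorted_cons_headI hs hne)
        · intro j hj1 hne
          rw [getD_set' _ _ hq]
          split
          · rename_i h
            exact sorted_cons_headI hs' hne
          · rename_i h
            have hjq : j < bi D x' := by omega
            exact le_trans (getD_le_of_lt_bi hjq (by omega))
              (sorted_cons_headI hs' hne)



def outRows : List ℕ → List (List ℕ) → List (List ℕ)
  | _, [] => []
  | C, r :: R => (carrierRun C r).2 :: outRows (carrierRun C r).1 R


lemma outRows_flatten (C : List ℕ) (R : List (List ℕ)) :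
    (outRows C R).flatten = (carrierRun C R.flatten).2 := by
  induction R generalizing C with
  | nil => rfl
  | cons r R ih =>
    show (carrierRun C r).2 ++ (outRows (carrierRun C r).1 R).flatten = _
    rw [ih, List.flatten_cons, carrierRun_append]

lemma main_rows : ∀ (R : List (List ℕ)) (C : List ℕ),
    C.Pairwise (· ≤ ·) → Bumps C R.flatten →
    (∀ r ∈ R, r.Pairwise (· ≤ ·)) →
    (∀ i, i + 1 < R.length → (R.getD i []).length ≤ (R.getD (i + 1) []).length) →
    (∀ i j, i + 1 < R.length → j < (R.getD i []).length →
        (R.getD (i + 1) []).getD j 0 < (R.getD i []).getD j 0) →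
    (∀ r ∈ outRows C R, r.Pairwise (· ≤ ·)) ∧
    (outRows C R).map List.length = R.map List.length ∧
    (∀ i j, i + 1 < R.length → j < (R.getD i []).length →
        ((outRows C R).getD (i + 1) []).getD j 0 < ((outRows C R).getD i []).getD j 0)
  | [], C => by intro _ _ _ _ _; exact ⟨by simp [outRows], rfl, by simp⟩
  | r :: R2, C => by
    intro hC hb hrows hlo hpt
    obtain ⟨hbr, hbR⟩ := bumps_append (v := R2.flatten) hb
    obtain ⟨hlen1, hC1⟩ := run_fst_length hC hbr
    have hrsort : r.Pairwise (· ≤ ·) := hrows r (by simp)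
    obtain ⟨ih1, ih2, ih3⟩ := main_rows R2 (carrierRun C r).1 hC1 hbR
      (fun r' hr' => hrows r' (by simp [hr']))
      (fun i hi => hlo (i + 1) (by simpa using hi))
      (fun i j hi hj => hpt (i + 1) j (by simpa using hi) hj)
    refine ⟨?_, ?_, ?_⟩
    · intro r' hr'
      rcases List.mem_cons.mp hr' with rfl | hr'
      · exact run_snd_sorted hC hrsort hbr
      · exact ih1 r' hr'
    · show ((carrierRun C r).2.length) :: _ = r.length :: _
      rw [run_snd_length, ih2]
    · intro i j hi hj
      cases i with
      | succ i =>
        show ((outRows (carrierRun C r).1 R2).getD (i + 1) []).getD j 0 <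
          ((outRows (carrierRun C r).1 R2).getD i []).getD j 0
        exact ih3 i j (by simpa using hi) (by simpa using hj)
      | zero =>
        cases R2 with
        | nil => simp at hi
        | cons r2 R3 =>
          obtain ⟨hbr2, _⟩ := bumps_append (v := R3.flatten) hbR
          show ((carrierRun (carrierRun C r).1 r2).2).getD j 0 <
            ((carrierRun C r).2).getD j 0
          refine two_row r r2 C (carrierRun C r).1 0 hC hC1 hrsort
            (hrows r2 (by simp)) ?_ ?_ hbr hbr2 hlen1 (by omega)
            (fun j _ hj => rfl) (by omega) (by omega) j (by simpa using hj)
          · have := hlo 0 (by simpa using hi)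
            simpa using this
          · intro j2 hj2
            have := hpt 0 j2 (by simpa using hi) (by simpa using hj2)
            simpa using this



lemma getD_reverse {l : List (List ℕ)} {i : ℕ} (hi : i < l.length) :
    l.reverse.getD i [] = l.getD (l.length - 1 - i) [] := by
  rw [List.getD_eq_getElem _ _ (by simpa using hi), List.getElem_reverse,
    List.getD_eq_getElem _ _ (by omega)]

lemma length_getD_eq_of_map {A B : List (List ℕ)} (h : A.map List.length = B.map List.length)
    (m : ℕ) : (A.getD m []).length = (B.getD m []).length := by
  have hlen : A.length = B.length := by
    have := congrArg List.length h; simpa using this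
  by_cases hm : m < A.length
  · rw [List.getD_eq_getElem _ _ hm, List.getD_eq_getElem _ _ (hlen ▸ hm)]
    have h1 : (A.map List.length).getD m 0 = (B.map List.length).getD m 0 := by rw [h]
    rw [List.getD_eq_getElem _ _ (by simpa using hm),
      List.getD_eq_getElem _ _ (by simp; omega)] at h1
    simpa using h1
  · rw [List.getD_eq_default _ _ (by omega), List.getD_eq_default _ _ (by omega)]

theorem carrierRun_tableauWord (Y b : List ℕ) (hY : Y.Pairwise (· ≤ ·))
    (T : List (List ℕ)) (hT : IsSSYT T) (hread : readingWord T = b)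
    (hbump : Bumps Y b) :
    ∃ T', IsSSYT T' ∧ readingWord T' = (carrierRun Y b).2 ∧
      T'.map List.length = T.map List.length := by
  subst hread
  obtain ⟨hT1, hT2, hT3, hT4⟩ := hT
  set R := T.reverse with hR
  set n := T.length with hn
  have hRlen : R.length = n := by simp [hR, hn]
  have hRgetD : ∀ i, i < n → R.getD i [] = T.getD (n - 1 - i) [] := by
    intro i hi
    rw [hR, getD_reverse (by omega)]
  -- hypotheses of main_rows
  have hrows : ∀ r ∈ R, r.Pairwise (· ≤ ·) := fun r hr => hT2 r (by
    rw [hR, List.mem_reverse] at hr; exact hr)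
  have hlo : ∀ i, i + 1 < R.length → (R.getD i []).length ≤ (R.getD (i + 1) []).length := by
    intro i hi
    rw [hRlen] at hi
    rw [hRgetD i (by omega), hRgetD (i + 1) (by omega)]
    have h1 : n - 1 - i = (n - 2 - i) + 1 := by omega
    have h2 : n - 1 - (i + 1) = n - 2 - i := by omega
    rw [h1, h2]
    exact hT3 (n - 2 - i) (by omega)
  have hpt : ∀ i j, i + 1 < R.length → j < (R.getD i []).length →
      (R.getD (i + 1) []).getD j 0 < (R.getD i []).getD j 0 := by
    intro i j hi hj
    rw [hRlen] at hi
    rw [hRgetD i (by omega)] at hj ⊢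
    rw [hRgetD (i + 1) (by omega)]
    have h1 : n - 1 - i = (n - 2 - i) + 1 := by omega
    have h2 : n - 1 - (i + 1) = n - 2 - i := by omega
    rw [h1] at hj ⊢
    rw [h2]
    exact hT4 (n - 2 - i) j (by omega) hj
  obtain ⟨hm1, hm2, hm3⟩ := main_rows R Y hY hbump hrows hlo hpt
  set O := outRows Y R with hO
  have hOlen : O.length = n := by
    have := congrArg List.length hm2
    simpa [hRlen] using this
  refine ⟨O.reverse, ⟨?_, ?_, ?_, ?_⟩, ?_, ?_⟩
  · -- rows nonempty
    intro r hr
    rw [List.mem_reverse] at hr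
    obtain ⟨i, hi, rfl⟩ := List.mem_iff_getElem.mp hr
    have h1 : (O.getD i []).length = (R.getD i []).length :=
      length_getD_eq_of_map hm2 i
    have h2 : R.getD i [] ∈ T := by
      rw [hRgetD i (by omega)]
      rw [List.getD_eq_getElem _ _ (show n - 1 - i < T.length by omega)]
      exact List.getElem_mem _
    have h3 := hT1 _ h2
    intro hemp
    rw [List.getD_eq_getElem _ _ hi, hemp] at h1
    simp only [List.length_nil] at h1
    exact h3 (List.length_eq_zero_iff.mp h1.symm)
  · -- rows sorted
    intro r hr
    rw [List.mem_reverse] at hr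
    exact hm1 r hr
  · -- lengths decrease
    intro i hi
    rw [List.length_reverse, hOlen] at hi
    have e : O.reverse.map List.length = T.map List.length := by
      rw [List.map_reverse, hm2, hR, List.map_reverse, List.reverse_reverse]
    rw [length_getD_eq_of_map e (i + 1), length_getD_eq_of_map e i]
    exact hT3 i (by omega)
  · -- columns strict
    intro i j hi hj
    rw [List.length_reverse, hOlen] at hi
    have e : O.reverse.map List.length = T.map List.length := by
      rw [List.map_reverse, hm2, hR, List.map_reverse, List.reverse_reverse]
    have hgi : O.reverse.getD i [] = O.getD (n - 1 - i) [] := by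
      have := getD_reverse (l := O) (i := i) (by omega)
      rw [hOlen] at this; exact this
    have hgi1 : O.reverse.getD (i + 1) [] = O.getD (n - 2 - i) [] := by
      have := getD_reverse (l := O) (i := i + 1) (by omega)
      rw [hOlen] at this
      have h2 : O.length - 1 - (i + 1) = n - 2 - i := by rw [hOlen]; omega
      rw [this]; congr 1; omega
    rw [hgi, hgi1]
    have h1 : n - 1 - i = (n - 2 - i) + 1 := by omega
    rw [h1]
    refine hm3 (n - 2 - i) j (by omega) ?_
    -- j < (R.getD (n-2-i) []).length
    have hj2 : j < (O.reverse.getD (i + 1) []).length := hj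
    rw [hgi1] at hj2
    have h3 : (O.getD (n - 2 - i) []).length = (R.getD (n - 2 - i) []).length :=
      length_getD_eq_of_map hm2 _
    omega
  · -- reading word
    show (O.reverse).reverse.flatten = _
    rw [List.reverse_reverse, hO, outRows_flatten]
    rfl
  · -- shapes
    rw [List.map_reverse, hm2, hR, List.map_reverse, List.reverse_reverse]


end CP

/-- If `b` is the reading word of a semistandard tableau `T` and each step of
the carrier algorithm on `(Y, b)` performs a genuine replacement (as is
automatic in the box-ball setting), then the output word of the carrier
algorithm is again the reading word of a semistandard tableau of the same
shape as `T`. -/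
theorem carrierRun_tableauWord (Y b : List ℕ) (hY : Y.Pairwise (· ≤ ·))
    (T : List (List ℕ)) (hT : IsSSYT T) (hread : readingWord T = b)
    (hbump : Bumps Y b) :
    ∃ T', IsSSYT T' ∧ readingWord T' = (carrierRun Y b).2 ∧
      T'.map List.length = T.map List.length :=
  CP.carrierRun_tableauWord Y b hY T hT hread hbump
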